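/- The multiplication obtained from a MHSS makes the algebra map a monoid-compatible algebra: with (t, η, τ) a MHSS and μ := {(t,η)}⟦1_t⟧, the diagram θ_{(t,η),t} · H μ · τ = (1_t ⊗ τ) · μ commutes, i.e., (t, η, μ, τ) is an (H, θ)-monoid. -/

import Mathlib

open CategoryTheory Category MonoidalCategory

section

variable {V : Type*} [Category V] [MonoidalCategory V]

/-- A pointed tensorial strength for an endofunctor `H` on a monoidal category `V`:
for each monoidal-pointed object `(z, e : I ⟶ z)` and each `x`, a morphism
`θ_{(z,e),x} : z ⊗ H x ⟶ H (z ⊗ x)`, natural in both arguments, satisfying the unitor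
law and the associator-compatibility (tensor) law. -/
structure PointedStrength (H : V ⥤ V) where
  θ : ∀ (z : V), (𝟙_ V ⟶ z) → ∀ x : V, z ⊗ H.obj x ⟶ H.obj (z ⊗ x)
  /-- naturality in the pointed-object argument -/
  nat_pt : ∀ {z z' : V} (e : 𝟙_ V ⟶ z) (e' : 𝟙_ V ⟶ z') (g : z ⟶ z'), e ≫ g = e' →
    ∀ x : V, g ▷ H.obj x ≫ θ z' e' x = θ z e x ≫ H.map (g ▷ x)
  /-- naturality in the second argument -/
  nat_arg : ∀ (z : V) (e : 𝟙_ V ⟶ z) {x x' : V} (f : x ⟶ x'),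
    z ◁ H.map f ≫ θ z e x' = θ z e x ≫ H.map (z ◁ f)
  /-- preservation of the unitor -/
  unit_law : ∀ x : V, θ (𝟙_ V) (𝟙 (𝟙_ V)) x ≫ H.map (λ_ x).hom = (λ_ (H.obj x)).hom
  /-- preservation of the actor (compatibility with the associator and the tensor of
  pointed objects) -/
  tensor_law : ∀ (z : V) (e : 𝟙_ V ⟶ z) (w : V) (e' : 𝟙_ V ⟶ w) (x : V),
    θ (z ⊗ w) ((λ_ (𝟙_ V)).inv ≫ (e ⊗ₘ e')) x ≫ H.map (α_ z w x).hom =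
      (α_ z w (H.obj x)).hom ≫ z ◁ θ w e' x ≫ θ z e (w ⊗ x)

/-- `(t, η, τ)` is a monoidal heterogeneous substitution system (MHSS) for `(V, H, θ)`:
for every `(z, e : I ⟶ z, f : z ⟶ t)` there is a unique `h : z ⊗ t ⟶ t` with
`(1_z ⊗ η) · h = ρ_z · f` and `(1_z ⊗ τ) · h = θ_{(z,e),t} · H h · τ`. -/
def IsMHSS {H : V ⥤ V} (S : PointedStrength H)
    (t : V) (η : 𝟙_ V ⟶ t) (τ : H.obj t ⟶ t) : Prop :=
  ∀ (z : V) (e : 𝟙_ V ⟶ z) (f : z ⟶ t),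
    ∃! h : z ⊗ t ⟶ t,
      z ◁ η ≫ h = (ρ_ z).hom ≫ f ∧
      z ◁ τ ≫ h = S.θ z e t ≫ H.map h ≫ τ

end

/-
Each monoid law is an instance of the uniqueness in the MHSS property: both sides solve the same
substitution problem `{(z, e)}⟦f⟧`. Solutions are stable under precomposition with `g ▷ t` (when
`g` respects the points) and under `α ≫ z ◁ k ≫ h`, which solves the problem for the tensor of two
pointed objects by the actor law of the strength. So `η ▷ t ≫ μ` and `λ_t` (a solution by the
unitor law) coincide, and then so do `μ ▷ t ≫ μ` and `α ≫ t ◁ μ ≫ μ`.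
-/

section

variable {V : Type*} [Category V] [MonoidalCategory V] {H : V ⥤ V} (S : PointedStrength H)
  {t : V} (η : 𝟙_ V ⟶ t) (τ : H.obj t ⟶ t)

/-- `h` is a solution `{(z, e)}⟦f⟧` of the substitution problem of `(t, η, τ)`. -/
def IsSubstitution {z : V} (e : 𝟙_ V ⟶ z) (f : z ⟶ t) (h : z ⊗ t ⟶ t) : Prop :=
  z ◁ η ≫ h = (ρ_ z).hom ≫ f ∧ z ◁ τ ≫ h = S.θ z e t ≫ H.map h ≫ τ

variable {S η τ}

theorem IsMHSS.eq (hmhss : IsMHSS S t η τ) {z : V} {e : 𝟙_ V ⟶ z} {f : z ⟶ t}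
    {h₁ h₂ : z ⊗ t ⟶ t} (h₁_sol : IsSubstitution S η τ e f h₁)
    (h₂_sol : IsSubstitution S η τ e f h₂) : h₁ = h₂ :=
  (hmhss z e f).unique h₁_sol h₂_sol

variable (S η τ) in
theorem isSubstitution_leftUnitor : IsSubstitution S η τ (𝟙 (𝟙_ V)) η (λ_ t).hom := by
  constructor
  · rw [leftUnitor_naturality, unitors_equal]
  · rw [leftUnitor_naturality, ← S.unit_law t, assoc]

theorem IsSubstitution.whiskerRight_comp {z z' : V} {e : 𝟙_ V ⟶ z} {e' : 𝟙_ V ⟶ z'}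
    {g : z ⟶ z'} (hg : e ≫ g = e') {f : z' ⟶ t} {h : z' ⊗ t ⟶ t}
    (hh : IsSubstitution S η τ e' f h) : IsSubstitution S η τ e (g ≫ f) (g ▷ t ≫ h) := by
  constructor
  · rw [whisker_exchange_assoc, hh.1, rightUnitor_naturality_assoc]
  · rw [whisker_exchange_assoc, hh.2, reassoc_of% (S.nat_pt e e' g hg t), H.map_comp, assoc]

theorem IsSubstitution.associator_comp {z w : V} {e : 𝟙_ V ⟶ z} {e' : 𝟙_ V ⟶ w}
    {f : z ⟶ t} {f' : w ⟶ t} {h : z ⊗ t ⟶ t} {k : w ⊗ t ⟶ t}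
    (hh : IsSubstitution S η τ e f h) (hk : IsSubstitution S η τ e' f' k) :
    IsSubstitution S η τ ((λ_ (𝟙_ V)).inv ≫ (e ⊗ₘ e')) (z ◁ f' ≫ h)
      ((α_ z w t).hom ≫ z ◁ k ≫ h) := by
  constructor
  · rw [associator_naturality_right_assoc, ← whiskerLeft_comp_assoc, hk.1,
      whiskerLeft_comp, rightUnitor_tensor_hom_assoc, assoc]
  · calc (z ⊗ w) ◁ τ ≫ (α_ z w t).hom ≫ z ◁ k ≫ h
        = (α_ z w (H.obj t)).hom ≫ z ◁ S.θ w e' t ≫ z ◁ H.map k ≫ z ◁ τ ≫ h := by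
          rw [associator_naturality_right_assoc, ← whiskerLeft_comp_assoc, hk.2]
          simp only [whiskerLeft_comp, assoc]
      _ = ((α_ z w (H.obj t)).hom ≫ z ◁ S.θ w e' t ≫ S.θ z e (w ⊗ t)) ≫
            H.map (z ◁ k) ≫ H.map h ≫ τ := by
          rw [hh.2, reassoc_of% (S.nat_arg z e k)]
          simp only [assoc]
      _ = S.θ (z ⊗ w) ((λ_ (𝟙_ V)).inv ≫ (e ⊗ₘ e')) t ≫
            H.map ((α_ z w t).hom ≫ z ◁ k ≫ h) ≫ τ := by
          rw [← S.tensor_law z e w e' t]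
          simp only [H.map_comp, assoc]

end

section

variable {V : Type*} [Category V] [MonoidalCategory V]

/-- The multiplication obtained from a MHSS makes the algebra map monoid-compatible:
with `(t, η, τ)` a MHSS and `μ := {(t,η)}⟦1_t⟧`, the diagram
`θ_{(t,η),t} · H μ · τ = (1_t ⊗ τ) · μ` commutes; i.e., `(t, η, μ, τ)` is an
`(H, θ)`-monoid. -/
theorem mhss_gives_H_monoid {H : V ⥤ V} (S : PointedStrength H)
    (t : V) (η : 𝟙_ V ⟶ t) (τ : H.obj t ⟶ t)
    (hmhss : IsMHSS S t η τ)
    (μ : t ⊗ t ⟶ t)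
    -- `μ` is the unique morphism `{(t,η)}⟦1_t⟧` determined by the MHSS property:
    (hμ₁ : t ◁ η ≫ μ = (ρ_ t).hom ≫ 𝟙 t)
    (hμ₂ : t ◁ τ ≫ μ = S.θ t η t ≫ H.map μ ≫ τ) :
    -- `(t, η, μ)` is a monoid ...
    (η ▷ t ≫ μ = (λ_ t).hom ∧
     t ◁ η ≫ μ = (ρ_ t).hom ∧
     (α_ t t t).hom ≫ t ◁ μ ≫ μ = μ ▷ t ≫ μ) ∧
    -- ... and the substitution compatibility square commutes:
    S.θ t η t ≫ H.map μ ≫ τ = t ◁ τ ≫ μ := by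
  have hμ : IsSubstitution S η τ η (𝟙 t) μ := ⟨hμ₁, hμ₂⟩
  have left_unit : η ▷ t ≫ μ = (λ_ t).hom := by
    have hη := hμ.whiskerRight_comp (id_comp η)
    rw [comp_id] at hη
    exact hmhss.eq hη (isSubstitution_leftUnitor S η τ)
  have unit_mul : ((λ_ (𝟙_ V)).inv ≫ (η ⊗ₘ η)) ≫ μ = η := by
    rw [assoc, tensorHom_def', assoc, left_unit, leftUnitor_naturality, Iso.inv_hom_id_assoc]
  have assoc_law : (α_ t t t).hom ≫ t ◁ μ ≫ μ = μ ▷ t ≫ μ := by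
    have hα := hμ.associator_comp hμ
    have hμμ := hμ.whiskerRight_comp unit_mul
    rw [whiskerLeft_id, id_comp] at hα
    rw [comp_id] at hμμ
    exact hmhss.eq hα hμμ
  exact ⟨⟨left_unit, hμ₁.trans (comp_id _), assoc_law⟩, hμ₂.symm⟩

end
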